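/- arXiv:2111.02763 — 8 statements merged into one kernel-verified Lean document; each statement's English description precedes it below -/
import Mathlib

section
/- If f : ℝᵈ → ℝ is μ-strongly convex, w, x ∈ ℝᵈ, v ∈ ℝᵈ, λ, ε ≥ 0, v − μx + μw ∈ ∂f(w), and (1/(2(1+λμ)²))‖x − y + λv‖² + (λ/(1+λμ))(f(x) − f(w) − ⟨x−w, v⟩ + (μ/2)‖x−w‖²) ≤ ε, then for every z ∈ ℝᵈ, f(z) ≥ f(x) + ⟨v, z−x⟩ + (μ/2)‖x−z‖² − ((1+λμ)/λ)ε; i.e., v is an ((1+λμ)/λ)ε-subgradient of f at x. -/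
open scoped RealInnerProductSpace

lemma inner_sub_smul_add_norm_sq_eq {E : Type*} [NormedAddCommGroup E] [InnerProductSpace ℝ E]
    (μ : ℝ) (x w v z : E) :
    ⟪v - μ • x + μ • w, z - w⟫ + μ / 2 * ‖z - w‖ ^ 2
      = ⟪v, z - x⟫ + μ / 2 * ‖x - z‖ ^ 2 + ⟪x - w, v⟫ - μ / 2 * ‖x - w‖ ^ 2 := by
  have hu : v - μ • x + μ • w = v - μ • (x - w) := by rw [smul_sub]; abel
  have hxz : ‖x - z‖ ^ 2 = ‖x - w‖ ^ 2 - 2 * ⟪x - w, z - w⟫ + ‖z - w‖ ^ 2 := by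
    rw [← norm_sub_sq_real, sub_sub_sub_cancel_right]
  have hzx : ⟪v, z - x⟫ = ⟪v, z - w⟫ - ⟪x - w, v⟫ := by
    rw [← sub_sub_sub_cancel_right z x w, inner_sub_right, real_inner_comm (x - w) v]
  rw [hu, inner_sub_left, real_inner_smul_left, hxz, hzx]
  ring

/- `u := v - μ • (x - w)` is the subgradient at `w`; moving the strong-convexity bound from
base point `w` to base point `x` costs exactly the inexactness gap of the proximal step. -/
lemma le_add_sub_gap_of_subgradient_shift {E : Type*} [NormedAddCommGroup E]
    [InnerProductSpace ℝ E] {f : E → ℝ} {μ : ℝ} {x w v : E}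
    (hw : ∀ z, f z ≥ f w + ⟪v - μ • x + μ • w, z - w⟫ + μ / 2 * ‖z - w‖ ^ 2) (z : E) :
    f z ≥ f x + ⟪v, z - x⟫ + μ / 2 * ‖x - z‖ ^ 2
      - (f x - f w - ⟪x - w, v⟫ + μ / 2 * ‖x - w‖ ^ 2) := by
  have := hw z
  rw [add_assoc, inner_sub_smul_add_norm_sq_eq] at this
  linarith

lemma le_div_mul_of_nonneg_add_div_mul_le {a b c lam ε : ℝ} (ha : 0 ≤ a) (hc : 0 < c)
    (hlam : 0 < lam) (h : a + lam / c * b ≤ ε) : b ≤ c / lam * ε := by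
  have hb : lam / c * b ≤ ε := by linarith
  rw [div_mul_eq_mul_div, div_le_iff₀ hc] at hb
  rw [div_mul_eq_mul_div, le_div_iff₀ hlam]
  linarith

theorem iprox_eps_subgradient_general {d : ℕ}
    (f : EuclideanSpace ℝ (Fin d) → ℝ)
    (SD : EuclideanSpace ℝ (Fin d) → Set (EuclideanSpace ℝ (Fin d)))
    (μ lam ε : ℝ) (hμ : 0 < μ) (hlam : 0 < lam)
    (hsc : ∀ p u, u ∈ SD p → ∀ y, f y ≥ f p + ⟪u, y - p⟫ + μ / 2 * ‖y - p‖ ^ 2)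
    (x y w v : EuclideanSpace ℝ (Fin d))
    (hmem : v - μ • x + μ • w ∈ SD w)
    (hiprox : 1 / (2 * (1 + lam * μ) ^ 2) * ‖x - y + lam • v‖ ^ 2
        + lam / (1 + lam * μ) * (f x - f w - ⟪x - w, v⟫ + μ / 2 * ‖x - w‖ ^ 2) ≤ ε) :
    ∀ z, f z ≥ f x + ⟪v, z - x⟫ + μ / 2 * ‖x - z‖ ^ 2 - (1 + lam * μ) / lam * ε := by
  intro z
  have hgap := le_div_mul_of_nonneg_add_div_mul_le (by positivity) (by positivity) hlam hiprox
  have hz := le_add_sub_gap_of_subgradient_shift (hsc w _ hmem) z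
  linarith

theorem iprox_eps_subgradient {d : ℕ}
    (f : EuclideanSpace ℝ (Fin d) → ℝ)
    (SD : EuclideanSpace ℝ (Fin d) → Set (EuclideanSpace ℝ (Fin d)))
    (μ lam ε : ℝ) (hμ : 0 < μ) (hlam : 0 < lam) (hε : 0 ≤ ε)
    (hsc : ∀ p u, u ∈ SD p → ∀ y, f y ≥ f p + ⟪u, y - p⟫ + μ / 2 * ‖y - p‖ ^ 2)
    (x y w v : EuclideanSpace ℝ (Fin d))
    (hmem : v - μ • x + μ • w ∈ SD w)
    (hiprox : 1 / (2 * (1 + lam * μ) ^ 2) * ‖x - y + lam • v‖ ^ 2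
        + lam / (1 + lam * μ) * (f x - f w - ⟪x - w, v⟫ + μ / 2 * ‖x - w‖ ^ 2) ≤ ε) :
    ∀ z, f z ≥ f x + ⟪v, z - x⟫ + μ / 2 * ‖x - z‖ ^ 2 - (1 + lam * μ) / lam * ε :=
  iprox_eps_subgradient_general f SD μ lam ε hμ hlam hsc x y w v hmem hiprox
end

section
/- Let f : ℝᵈ → ℝ be μ-strongly convex with minimizer x*. Suppose w, z, z', x ∈ ℝᵈ, v ∈ ℝᵈ, ∇ := v + μ(w − x) ∈ ∂f(w), and given positive reals a, A, A' with A' = A + a and the update z' = ((1+μA)/(1+μA'))z + (μa/(1+μA'))w − (a/(1+μA'))∇. Then ((1+μA)/2)‖z − x*‖² − ((1+μA')/2)‖z' − x*‖² ≥ a(f(w) − f(x*)) + (μa(1+μA)/(2(1+μA')))‖z − w + μ⁻¹∇‖² − (a/(2μ))‖∇‖². -/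
/-!
The update is an averaging step: `z' - x*` is the combination, with weights
`(1 + μA)/(1 + μA')` and `μa/(1 + μA')` summing to one, of `z - x*` and `w - μ⁻¹∇ - x*`.
Expanding the squared norm of such a combination rewrites the left-hand side exactly
in terms of `⟪∇, w - x*⟫ - μ/2 ‖w - x*‖²`, and strong convexity at `w`, evaluated at `x*`,
bounds this quantity below by `f w - f x*`.
-/

open scoped RealInnerProductSpace

section InnerProductSpace

variable {F : Type*} [NormedAddCommGroup F] [InnerProductSpace ℝ F]

theorem norm_smul_add_smul_sq_of_add_eq_one {s t : ℝ} (hst : s + t = 1) (p q : F) :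
    ‖s • p + t • q‖ ^ 2 = s * ‖p‖ ^ 2 + t * ‖q‖ ^ 2 - s * t * ‖p - q‖ ^ 2 := by
  rw [norm_add_sq_real, norm_sub_sq_real, norm_smul, norm_smul, real_inner_smul_left,
    real_inner_smul_right, mul_pow, mul_pow, Real.norm_eq_abs, Real.norm_eq_abs, sq_abs, sq_abs]
  obtain rfl := eq_sub_of_add_eq hst
  ring

theorem averaged_step_sub_eq {μ τ τ' a : ℝ} (hμ : μ ≠ 0) (hτ' : τ' ≠ 0)
    (hsum : τ' = τ + μ * a) (z w g y : F) :
    (τ / τ') • z + (μ * a / τ') • w - (a / τ') • g - y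
      = (τ / τ') • (z - y) + (μ * a / τ') • (w - μ⁻¹ • g - y) := by
  have hy : y = (τ / τ') • y + (μ * a / τ') • y := by
    rw [← add_smul, ← add_div, ← hsum, div_self hτ', one_smul]
  conv_lhs => rw [hy]
  simp only [smul_sub, smul_smul]
  rw [show μ * a / τ' * μ⁻¹ = a / τ' by field_simp]
  abel

theorem half_sq_dist_sub_averaged_step_eq {μ τ τ' a : ℝ} (hμ : μ ≠ 0) (hτ' : τ' ≠ 0)
    (hsum : τ' = τ + μ * a) (z w g y : F) :
    τ / 2 * ‖z - y‖ ^ 2 - τ' / 2 * ‖(τ / τ') • z + (μ * a / τ') • w - (a / τ') • g - y‖ ^ 2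
      = a * (⟪g, w - y⟫ - μ / 2 * ‖w - y‖ ^ 2)
        + μ * a * τ / (2 * τ') * ‖z - w + μ⁻¹ • g‖ ^ 2 - a / (2 * μ) * ‖g‖ ^ 2 := by
  have hweights : τ / τ' + μ * a / τ' = 1 := by rw [← add_div, ← hsum, div_self hτ']
  have hdiff : z - y - (w - μ⁻¹ • g - y) = z - w + μ⁻¹ • g := by abel
  have hshift :
      ‖w - y - μ⁻¹ • g‖ ^ 2 = ‖w - y‖ ^ 2 - 2 * μ⁻¹ * ⟪g, w - y⟫ + μ⁻¹ ^ 2 * ‖g‖ ^ 2 := by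
    rw [norm_sub_sq_real, norm_smul, real_inner_smul_right, mul_pow, Real.norm_eq_abs, sq_abs,
      real_inner_comm]
    ring
  rw [averaged_step_sub_eq hμ hτ' hsum, norm_smul_add_smul_sq_of_add_eq_one hweights, hdiff,
    sub_right_comm, hshift]
  subst hsum
  field_simp
  ring

end InnerProductSpace

theorem distance_decrease_lemma_general {d : ℕ}
    (f : EuclideanSpace ℝ (Fin d) → ℝ)
    (SD : EuclideanSpace ℝ (Fin d) → Set (EuclideanSpace ℝ (Fin d)))
    (μ : ℝ) (hμ : 0 < μ)
    (hsc : ∀ p u, u ∈ SD p → ∀ y, f y ≥ f p + ⟪u, y - p⟫ + μ / 2 * ‖y - p‖ ^ 2)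
    (xstar : EuclideanSpace ℝ (Fin d))
    (w z z' g : EuclideanSpace ℝ (Fin d))
    (hgmem : g ∈ SD w)
    (a A A' : ℝ) (hA : 0 ≤ A) (ha : 0 < a) (hA' : A' = A + a)
    (hz' : z' = ((1 + μ * A) / (1 + μ * A')) • z + (μ * a / (1 + μ * A')) • w
        - (a / (1 + μ * A')) • g) :
    (1 + μ * A) / 2 * ‖z - xstar‖ ^ 2 - (1 + μ * A') / 2 * ‖z' - xstar‖ ^ 2
      ≥ a * (f w - f xstar)
        + μ * a * (1 + μ * A) / (2 * (1 + μ * A')) * ‖z - w + μ⁻¹ • g‖ ^ 2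
        - a / (2 * μ) * ‖g‖ ^ 2 := by
  have hτ' : 1 + μ * A' ≠ 0 := by rw [hA']; positivity
  have hgap : f w - f xstar ≤ ⟪g, w - xstar⟫ - μ / 2 * ‖w - xstar‖ ^ 2 := by
    have := hsc w g hgmem xstar
    rw [← neg_sub w xstar, inner_neg_right, norm_neg] at this
    linarith
  rw [hz', half_sq_dist_sub_averaged_step_eq hμ.ne' hτ' (by rw [hA']; ring)]
  gcongr

theorem distance_decrease_lemma {d : ℕ}
    (f : EuclideanSpace ℝ (Fin d) → ℝ)
    (SD : EuclideanSpace ℝ (Fin d) → Set (EuclideanSpace ℝ (Fin d)))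
    (μ : ℝ) (hμ : 0 < μ)
    (hsc : ∀ p u, u ∈ SD p → ∀ y, f y ≥ f p + ⟪u, y - p⟫ + μ / 2 * ‖y - p‖ ^ 2)
    (xstar : EuclideanSpace ℝ (Fin d)) (hmin : ∀ y, f xstar ≤ f y)
    (w z z' x v g : EuclideanSpace ℝ (Fin d))
    (hg : g = v + μ • (w - x)) (hgmem : g ∈ SD w)
    (a A A' : ℝ) (hA : 0 ≤ A) (ha : 0 < a) (hA' : A' = A + a)
    (hz' : z' = ((1 + μ * A) / (1 + μ * A')) • z + (μ * a / (1 + μ * A')) • w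
        - (a / (1 + μ * A')) • g) :
    (1 + μ * A) / 2 * ‖z - xstar‖ ^ 2 - (1 + μ * A') / 2 * ‖z' - xstar‖ ^ 2
      ≥ a * (f w - f xstar)
        + μ * a * (1 + μ * A) / (2 * (1 + μ * A')) * ‖z - w + μ⁻¹ • g‖ ^ 2
        - a / (2 * μ) * ‖g‖ ^ 2 :=
  distance_decrease_lemma_general f SD μ hμ hsc xstar w z z' g hgmem a A A' hA ha hA' hz'
end

section
/- Let μ, λ > 0 and A ≥ 0, and define a = ((1+2μA)λ + √((1+2μA)²λ² + 4(1+μA)Aλ))/2. Then a ≥ A·max{μλ, √(μλ)}. -/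
/-! `a` is the positive root of `x ^ 2 = b x + c` with `b = (1 + 2μA)λ` and `c = (1 + μA)Aλ`.
That root is at least `b ≥ Aμλ` and at least `√c ≥ √(A²μλ) = A√(μλ)`. -/

open Real

theorem le_half_add_sqrt_sq_add {b c : ℝ} (hc : 0 ≤ c) : b ≤ (b + √(b ^ 2 + 4 * c)) / 2 := by
  have : b ≤ √(b ^ 2 + 4 * c) :=
    (le_abs_self b).trans ((sqrt_sq_eq_abs b).symm.le.trans (sqrt_le_sqrt (by linarith)))
  linarith

theorem sqrt_le_half_add_sqrt_sq_add {b c : ℝ} (hb : 0 ≤ b) : √c ≤ (b + √(b ^ 2 + 4 * c)) / 2 := by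
  have : 2 * √c ≤ √(b ^ 2 + 4 * c) := calc
    2 * √c = √(4 * c) := by
      rw [sqrt_mul (by norm_num), show (4 : ℝ) = 2 ^ 2 by norm_num, sqrt_sq (by norm_num)]
    _ ≤ √(b ^ 2 + 4 * c) := sqrt_le_sqrt (by nlinarith)
  linarith

theorem a_growth_lower_bound (μ lam A : ℝ) (hμ : 0 < μ) (hlam : 0 < lam) (hA : 0 ≤ A)
    (a : ℝ)
    (ha : a = ((1 + 2 * μ * A) * lam
        + Real.sqrt ((1 + 2 * μ * A) ^ 2 * lam ^ 2 + 4 * (1 + μ * A) * A * lam)) / 2) :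
    a ≥ A * max (μ * lam) (Real.sqrt (μ * lam)) := by
  have ha' : a = ((1 + 2 * μ * A) * lam
      + √(((1 + 2 * μ * A) * lam) ^ 2 + 4 * ((1 + μ * A) * A * lam))) / 2 := by
    rw [ha]; ring_nf
  set b := (1 + 2 * μ * A) * lam
  set c := (1 + μ * A) * A * lam
  have hb : 0 ≤ b := by positivity
  have hc : 0 ≤ c := by positivity
  rw [ge_iff_le, mul_max_of_nonneg _ _ hA, ha']
  refine max_le ?_ ?_
  · calc A * (μ * lam) ≤ b := by nlinarith [mul_nonneg hA hμ.le]
      _ ≤ _ := le_half_add_sqrt_sq_add hc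
  · calc A * √(μ * lam) = √(A ^ 2 * (μ * lam)) := by rw [sqrt_mul (sq_nonneg A), sqrt_sq hA]
      _ ≤ √c := sqrt_le_sqrt (by nlinarith)
      _ ≤ _ := sqrt_le_half_add_sqrt_sq_add hb
end

section
/- Let μ, λ > 0, σ ∈ (0,1) and A₊ > 0, and set α = (A₊/2)(μ/(1+μλ) + (1−σ)/λ), β = −(A₊/2)·μλ/(1+μλ), γ = (A₊/2)·μλ²/(1+μλ). Then β² = (α − (1−σ)A₊/(2λ))·γ, and consequently for all vectors u, v in a real inner product space, α‖u‖² + 2β⟨u, v⟩ + γ‖v‖² ≥ ((1−σ)A₊/(2λ))‖u‖². -/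
open scoped RealInnerProductSpace

theorem quadratic_form_nonneg {E : Type*} [NormedAddCommGroup E] [InnerProductSpace ℝ E]
    (μ lam σ Ap α β γ : ℝ) (hμ : 0 < μ) (hlam : 0 < lam)
    (hσ : σ ∈ Set.Ioo (0 : ℝ) 1) (hAp : 0 < Ap)
    (hα : α = Ap / 2 * (μ / (1 + μ * lam) + (1 - σ) / lam))
    (hβ : β = -(Ap / 2) * (μ * lam / (1 + μ * lam)))
    (hγ : γ = Ap / 2 * (μ * lam ^ 2 / (1 + μ * lam))) :
    β ^ 2 = (α - (1 - σ) * Ap / (2 * lam)) * γ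
      ∧ ∀ u v : E, α * ‖u‖ ^ 2 + 2 * β * ⟪u, v⟫ + γ * ‖v‖ ^ 2
          ≥ (1 - σ) * Ap / (2 * lam) * ‖u‖ ^ 2 := by
  have hden : 0 < 1 + μ * lam := by positivity
  have hkey : β ^ 2 = (α - (1 - σ) * Ap / (2 * lam)) * γ := by
    subst hα hβ hγ
    field_simp
    ring
  refine ⟨hkey, fun u v => ?_⟩
  have hβneg : β < 0 := by
    rw [hβ]
    have : 0 < μ * lam / (1 + μ * lam) := by positivity
    nlinarith
  have hγpos : 0 < γ := by rw [hγ]; positivity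
  have hCS : ⟪u, v⟫ ≤ ‖u‖ * ‖v‖ := real_inner_le_norm u v
  have h1 : 0 ≤ (-(β * γ)) * (‖u‖ * ‖v‖ - ⟪u, v⟫) := by
    apply mul_nonneg
    · nlinarith
    · linarith
  nlinarith [sq_nonneg (β * ‖u‖ + γ * ‖v‖), h1, hγpos, hkey]
end

section
/- Let f : ℝᵈ → ℝ be μ-strongly convex and L-smooth (gradient L-Lipschitz), μ ≤ L. Fix λ > 0 with Lλ(1+μλ) ≤ σ² for some σ ∈ (0,1). Given y ∈ ℝᵈ, set x = y − λ∇f(y) and v = ∇f(y) + μ(x − y). Then (1/(2(1+λμ)²))‖x − y + λv‖² + (λ/(1+λμ))(f(x) − f(y) − ⟨x − y, v⟩ + (μ/2)‖x−y‖²) ≤ (σ²/(2(1+λμ)²))‖x − y‖². -/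
/-!
Along the step, every vector in the statement is a multiple of `g = ∇f(y)`: `x - y = -λ g`,
`v = (1 - λμ) g` and `x - y + λ v = -λ²μ g`. The descent lemma
`f x ≤ f y + ⟪g, x - y⟫ + L/2 ‖x - y‖²` (the gap between this quadratic model and `f` is monotone
along the segment, since `∇f` is `L`-Lipschitz) bounds the left side by
`(Lλ(1 + μλ) - λμ) λ² ‖g‖² / (2(1 + λμ)²)`, and the step-size condition finishes.
-/

open scoped RealInnerProductSpace

section Smooth

variable {E : Type*} [NormedAddCommGroup E] [InnerProductSpace ℝ E] [CompleteSpace E]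
  {f : E → ℝ} {L : ℝ}

theorem hasDerivAt_apply_add_smul (hf : Differentiable ℝ f) (y u : E) (t : ℝ) :
    HasDerivAt (fun s : ℝ => f (y + s • u)) ⟪gradient f (y + t • u), u⟫ t := by
  have hline : HasDerivAt (fun s : ℝ => y + s • u) u t := by
    simpa using ((hasDerivAt_id t).smul_const u).const_add y
  rw [inner_gradient_left]
  exact (hf _).hasFDerivAt.comp_hasDerivAt t hline

theorem image_le_add_inner_gradient_add_sq (hf : Differentiable ℝ f)
    (hL : ∀ a b, ‖gradient f a - gradient f b‖ ≤ L * ‖a - b‖) (x y : E) :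
    f x ≤ f y + ⟪gradient f y, x - y⟫ + L / 2 * ‖x - y‖ ^ 2 := by
  set u := x - y
  set φ : ℝ → ℝ := fun t => f y + t * ⟪gradient f y, u⟫ + L / 2 * t ^ 2 * ‖u‖ ^ 2 - f (y + t • u)
  have hφ : ∀ t, HasDerivAt φ
      (⟪gradient f y, u⟫ + L * t * ‖u‖ ^ 2 - ⟪gradient f (y + t • u), u⟫) t := by
    intro t
    refine (((((hasDerivAt_id t).mul_const _).const_add (f y)).add
      (((hasDerivAt_pow 2 t).const_mul (L / 2)).mul_const (‖u‖ ^ 2))).sub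
      (hasDerivAt_apply_add_smul hf y u t)).congr_deriv ?_
    ring
  have hφ_nonneg : ∀ t, 0 ≤ t →
      0 ≤ ⟪gradient f y, u⟫ + L * t * ‖u‖ ^ 2 - ⟪gradient f (y + t • u), u⟫ := by
    intro t ht
    have hdist : ‖(y + t • u) - y‖ = t * ‖u‖ := by
      rw [add_sub_cancel_left, norm_smul, Real.norm_of_nonneg ht]
    have hgap : ⟪gradient f (y + t • u), u⟫ - ⟪gradient f y, u⟫ ≤ L * t * ‖u‖ ^ 2 := calc
      ⟪gradient f (y + t • u), u⟫ - ⟪gradient f y, u⟫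
        = ⟪gradient f (y + t • u) - gradient f y, u⟫ := (inner_sub_left _ _ _).symm
      _ ≤ ‖gradient f (y + t • u) - gradient f y‖ * ‖u‖ := real_inner_le_norm _ _
      _ ≤ L * (t * ‖u‖) * ‖u‖ := by
          gcongr
          exact hdist ▸ hL _ _
      _ = L * t * ‖u‖ ^ 2 := by ring
    linarith
  have hmono : MonotoneOn φ (Set.Ici 0) :=
    monotoneOn_of_hasDerivWithinAt_nonneg (convex_Ici 0)
      (fun t _ => (hφ t).continuousAt.continuousWithinAt)
      (fun t _ => (hφ t).hasDerivWithinAt)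
      (fun t ht => hφ_nonneg t (interior_subset ht))
  have h01 := hmono Set.self_mem_Ici (Set.mem_Ici.2 zero_le_one) zero_le_one
  simp only [φ, zero_mul, add_zero, zero_smul, one_mul, one_smul, one_pow, mul_one,
    zero_pow two_ne_zero, mul_zero, sub_self, u, add_sub_cancel] at h01
  linarith

theorem image_sub_smul_gradient_le (hf : Differentiable ℝ f)
    (hL : ∀ a b, ‖gradient f a - gradient f b‖ ≤ L * ‖a - b‖) (y : E) (lam : ℝ) :
    f (y - lam • gradient f y) ≤ f y - lam * (1 - L * lam / 2) * ‖gradient f y‖ ^ 2 := by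
  have h := image_le_add_inner_gradient_add_sq hf hL (y - lam • gradient f y) y
  rw [sub_sub_cancel_left, ← neg_smul, inner_smul_right, real_inner_self_eq_norm_sq, norm_smul,
    Real.norm_eq_abs, mul_pow, sq_abs] at h
  linarith

end Smooth

theorem gradient_step_is_iprox_general {d : ℕ}
    (f : EuclideanSpace ℝ (Fin d) → ℝ)
    (μ L lam σ : ℝ) (hμ : 0 < μ) (hlam : 0 < lam)
    (hstep : L * lam * (1 + μ * lam) ≤ σ ^ 2)
    (hdiff : Differentiable ℝ f)
    (hsmooth : ∀ a b, ‖gradient f a - gradient f b‖ ≤ L * ‖a - b‖)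
    (y x v : EuclideanSpace ℝ (Fin d))
    (hx : x = y - lam • gradient f y)
    (hv : v = gradient f y + μ • (x - y)) :
    1 / (2 * (1 + lam * μ) ^ 2) * ‖x - y + lam • v‖ ^ 2
      + lam / (1 + lam * μ) * (f x - f y - ⟪x - y, v⟫ + μ / 2 * ‖x - y‖ ^ 2)
      ≤ σ ^ 2 / (2 * (1 + lam * μ) ^ 2) * ‖x - y‖ ^ 2 := by
  have hdesc := hx ▸ image_sub_smul_gradient_le hdiff hsmooth y lam
  set g := gradient f y
  have hxy : x - y = (-lam) • g := by rw [hx]; module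
  have hv' : v = (1 - lam * μ) • g := by rw [hv, hxy]; module
  have hw : x - y + lam • v = (-(lam ^ 2 * μ)) • g := by rw [hxy, hv']; module
  rw [hw, hxy, hv', norm_smul, norm_smul, real_inner_smul_left, real_inner_smul_right,
    real_inner_self_eq_norm_sq, Real.norm_eq_abs, Real.norm_eq_abs, mul_pow, mul_pow, sq_abs,
    sq_abs, neg_sq, neg_sq]
  have hbracket : f x - f y - -lam * ((1 - lam * μ) * ‖g‖ ^ 2)
      + μ / 2 * (lam ^ 2 * ‖g‖ ^ 2) ≤ (L - μ) * lam ^ 2 / 2 * ‖g‖ ^ 2 := by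
    linarith
  calc _ ≤ 1 / (2 * (1 + lam * μ) ^ 2) * ((lam ^ 2 * μ) ^ 2 * ‖g‖ ^ 2)
        + lam / (1 + lam * μ) * ((L - μ) * lam ^ 2 / 2 * ‖g‖ ^ 2) := by gcongr _ + _ * ?_
    -- `(lam μ)² + (1 + lam μ) lam (L - μ) = L lam (1 + μ lam) - lam μ`
    _ = (L * lam * (1 + μ * lam) - lam * μ) * lam ^ 2 * ‖g‖ ^ 2 / (2 * (1 + lam * μ) ^ 2) := by
        field_simp
        ring
    _ ≤ σ ^ 2 * lam ^ 2 * ‖g‖ ^ 2 / (2 * (1 + lam * μ) ^ 2) := by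
        gcongr
        linarith [mul_pos hlam hμ]
    _ = _ := by ring

theorem gradient_step_is_iprox {d : ℕ}
    (f : EuclideanSpace ℝ (Fin d) → ℝ)
    (μ L lam σ : ℝ) (hμ : 0 < μ) (hμL : μ ≤ L) (hlam : 0 < lam)
    (hσ : σ ∈ Set.Ioo (0 : ℝ) 1) (hstep : L * lam * (1 + μ * lam) ≤ σ ^ 2)
    (hdiff : Differentiable ℝ f)
    (hsc : ∀ a b, f b ≥ f a + ⟪gradient f a, b - a⟫ + μ / 2 * ‖b - a‖ ^ 2)
    (hsmooth : ∀ a b, ‖gradient f a - gradient f b‖ ≤ L * ‖a - b‖)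
    (y x v : EuclideanSpace ℝ (Fin d))
    (hx : x = y - lam • gradient f y)
    (hv : v = gradient f y + μ • (x - y)) :
    1 / (2 * (1 + lam * μ) ^ 2) * ‖x - y + lam • v‖ ^ 2
      + lam / (1 + lam * μ) * (f x - f y - ⟪x - y, v⟫ + μ / 2 * ‖x - y‖ ^ 2)
      ≤ σ ^ 2 / (2 * (1 + lam * μ) ^ 2) * ‖x - y‖ ^ 2 :=
  gradient_step_is_iprox_general f μ L lam σ hμ hlam hstep hdiff hsmooth y x v hx hv
end

section
/- Let f : ℝᵈ → ℝ be differentiable, μ-strongly convex and L-smooth, and let λ ∈ (0, 1/L]. Given y ∈ ℝᵈ, let x̃ = y − λ∇f(y) and x = x̃ − λ∇f(x̃). Then ‖(1+μλ)(x − y) + λ∇f(y)‖² ≤ ((L/2)λ(1+μλ) + 1/2)‖x − y‖² + (1+μλ)‖x−y‖² − 2((1+μλ)(1 − Lλ/2) − 1/2)(‖y − x̃‖² + ‖x̃ − x‖²). In particular, if Lλ(1+μλ) ≤ 1/2, then ‖(1+μλ)(x − y) + λ∇f(y)‖² ≤ ((L/2)λ(1+μλ) + 1/2 + (1+μλ))‖x−y‖²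 − 2((1+μλ)(1−Lλ/2) − 1/2)(‖y−x̃‖² + ‖x̃−x‖²). -/
/-!
Expand the square. Strong convexity bounds the cross term `2(1 + μλ)⟪x - y, λ∇f(y)⟫` by
`2(1 + μλ)λ(f x - f y) - (1 + μλ)μλ‖x - y‖²`, and the descent lemma, applied to each of the two
gradient steps, gives `λ(f y - f x) ≥ (1 - Lλ/2)(‖y - x̃‖² + ‖x̃ - x‖²)`. What is left,
`‖λ∇f(y)‖² = ‖y - x̃‖²`, is absorbed by the `- 1/2` in the last coefficient.
-/

open scoped RealInnerProductSpace

section Descent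

variable {E : Type*} [NormedAddCommGroup E] [InnerProductSpace ℝ E] [CompleteSpace E]
  {f : E → ℝ} {L : ℝ}

theorem HasGradientAt.hasDerivAt_comp_add_smul {g a v : E} {t : ℝ}
    (h : HasGradientAt f g (a + t • v)) :
    HasDerivAt (fun s : ℝ => f (a + s • v)) ⟪g, v⟫ t := by
  have hline : HasDerivAt (fun s : ℝ => a + s • v) v t := by
    simpa using ((hasDerivAt_id t).smul_const v).const_add a
  exact (h.hasFDerivAt.comp_hasDerivAt t hline).congr_deriv
    (by simp [InnerProductSpace.toDual_apply_apply])

theorem inner_gradient_add_smul_sub_le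
    (hsmooth : ∀ a b, ‖gradient f a - gradient f b‖ ≤ L * ‖a - b‖)
    (a v : E) {t : ℝ} (ht : 0 ≤ t) :
    ⟪gradient f (a + t • v) - gradient f a, v⟫ ≤ L * t * ‖v‖ ^ 2 :=
  calc ⟪gradient f (a + t • v) - gradient f a, v⟫
      ≤ ‖gradient f (a + t • v) - gradient f a‖ * ‖v‖ := real_inner_le_norm _ _
    _ ≤ L * ‖(a + t • v) - a‖ * ‖v‖ := by gcongr; exact hsmooth _ _
    _ = L * t * ‖v‖ ^ 2 := by
      rw [add_sub_cancel_left, norm_smul, Real.norm_of_nonneg ht]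
      ring

theorem le_add_inner_gradient_add_sq (hdiff : Differentiable ℝ f)
    (hsmooth : ∀ a b, ‖gradient f a - gradient f b‖ ≤ L * ‖a - b‖) (a b : E) :
    f b ≤ f a + ⟪gradient f a, b - a⟫ + L / 2 * ‖b - a‖ ^ 2 := by
  set v := b - a
  -- compare `t ↦ f (a + t v) - t ⟪∇f a, v⟫` with the parabola `f a + (L/2) t² ‖v‖²` on `[0, 1]`
  have hφ (t : ℝ) : HasDerivAt (fun s : ℝ => f (a + s • v) - s * ⟪gradient f a, v⟫)
      (⟪gradient f (a + t • v) - gradient f a, v⟫) t := by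
    rw [inner_sub_left]
    exact ((hdiff _).hasGradientAt.hasDerivAt_comp_add_smul).sub
      (by simpa using (hasDerivAt_id t).mul_const ⟪gradient f a, v⟫)
  have hB (t : ℝ) : HasDerivAt (fun s : ℝ => f a + L / 2 * s ^ 2 * ‖v‖ ^ 2)
      (L * t * ‖v‖ ^ 2) t := by
    refine ((((hasDerivAt_pow 2 t).const_mul (L / 2)).mul_const (‖v‖ ^ 2)).const_add
      (f a)).congr_deriv ?_
    push_cast
    ring
  have hcomp := image_le_of_deriv_right_le_deriv_boundary
    (fun t _ => (hφ t).continuousAt.continuousWithinAt) (fun t _ => (hφ t).hasDerivWithinAt)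
    (by simp) (fun t _ => (hB t).continuousAt.continuousWithinAt)
    (fun t _ => (hB t).hasDerivWithinAt)
    (fun t ht => inner_gradient_add_smul_sub_le hsmooth a v ht.1)
    (Set.right_mem_Icc.mpr zero_le_one)
  simp only [one_smul, add_sub_cancel, one_mul, one_pow, mul_one, v] at hcomp
  linarith

theorem sq_norm_sub_gradient_step_le (hdiff : Differentiable ℝ f)
    (hsmooth : ∀ a b, ‖gradient f a - gradient f b‖ ≤ L * ‖a - b‖)
    {lam : ℝ} (hlam : 0 ≤ lam) {y z : E} (hz : z = y - lam • gradient f y) :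
    (1 - L * lam / 2) * ‖y - z‖ ^ 2 ≤ lam * (f y - f z) := by
  have hdescent := le_add_inner_gradient_add_sq hdiff hsmooth y z
  have hzy : z - y = -(lam • gradient f y) := by rw [hz]; abel
  have hyz : y - z = lam • gradient f y := by rw [hz]; abel
  rw [hzy, inner_neg_right, real_inner_smul_right, real_inner_self_eq_norm_sq, norm_neg,
    norm_smul, Real.norm_of_nonneg hlam] at hdescent
  rw [hyz, norm_smul, Real.norm_of_nonneg hlam]
  nlinarith [mul_le_mul_of_nonneg_left hdescent hlam]

end Descent

theorem two_gradient_steps_bound {d : ℕ}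
    (f : EuclideanSpace ℝ (Fin d) → ℝ)
    (μ L lam : ℝ) (hμ : 0 < μ) (hL : 0 < L)
    (hlam : lam ∈ Set.Ioc (0 : ℝ) (1 / L))
    (hdiff : Differentiable ℝ f)
    (hsc : ∀ a b, f b ≥ f a + ⟪gradient f a, b - a⟫ + μ / 2 * ‖b - a‖ ^ 2)
    (hsmooth : ∀ a b, ‖gradient f a - gradient f b‖ ≤ L * ‖a - b‖)
    (y xt x : EuclideanSpace ℝ (Fin d))
    (hxt : xt = y - lam • gradient f y)
    (hx : x = xt - lam • gradient f xt) :
    ‖(1 + μ * lam) • (x - y) + lam • gradient f y‖ ^ 2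
        ≤ (L / 2 * lam * (1 + μ * lam) + 1 / 2) * ‖x - y‖ ^ 2
          + (1 + μ * lam) * ‖x - y‖ ^ 2
          - 2 * ((1 + μ * lam) * (1 - L * lam / 2) - 1 / 2) * (‖y - xt‖ ^ 2 + ‖xt - x‖ ^ 2)
      ∧ (L * lam * (1 + μ * lam) ≤ 1 / 2 →
          ‖(1 + μ * lam) • (x - y) + lam • gradient f y‖ ^ 2
            ≤ (L / 2 * lam * (1 + μ * lam) + 1 / 2 + (1 + μ * lam)) * ‖x - y‖ ^ 2
              - 2 * ((1 + μ * lam) * (1 - L * lam / 2) - 1 / 2)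
                  * (‖y - xt‖ ^ 2 + ‖xt - x‖ ^ 2)) := by
  obtain ⟨hlam0, -⟩ := hlam
  set c := 1 + μ * lam
  set g := gradient f y
  have hstep₁ := sq_norm_sub_gradient_step_le hdiff hsmooth hlam0.le hxt
  have hstep₂ := sq_norm_sub_gradient_step_le hdiff hsmooth hlam0.le hx
  have hconvex : ⟪g, x - y⟫ ≤ f x - f y - μ / 2 * ‖x - y‖ ^ 2 := by linarith [hsc y x]
  have hexpand : ‖c • (x - y) + lam • g‖ ^ 2
      = c ^ 2 * ‖x - y‖ ^ 2 + 2 * c * (lam * ⟪g, x - y⟫) + ‖y - xt‖ ^ 2 := by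
    rw [show y - xt = lam • g by rw [hxt]; abel, norm_add_sq_real, norm_smul, norm_smul,
      real_inner_smul_left, real_inner_smul_right, real_inner_comm, Real.norm_eq_abs,
      mul_pow, sq_abs]
    ring
  have hinner : lam * ⟪g, x - y⟫
      ≤ -(1 - L * lam / 2) * (‖y - xt‖ ^ 2 + ‖xt - x‖ ^ 2) - lam * μ / 2 * ‖x - y‖ ^ 2 := by
    nlinarith [mul_le_mul_of_nonneg_left hconvex hlam0.le]
  have hc : 0 ≤ c := by positivity
  have hmain := mul_le_mul_of_nonneg_left hinner (mul_nonneg zero_le_two hc)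
  have hcoeff : 0 ≤ (L / 2 * lam * c + 1 / 2) * ‖x - y‖ ^ 2 := by positivity
  refine ⟨?_, fun _ => ?_⟩ <;> nlinarith [sq_nonneg ‖xt - x‖]
end

section
/- Let c ∈ (0,1) and δ ≥ 1 with δ ≤ 1 + (1/9)ξ*, where ξ* = (9/10)√c. If ξ ≥ ξ* and ξ' ∈ (0,1) satisfies δξ'(ξ' − c) = ξ²(1 − ξ'), then ξ' ≥ ξ*. -/
/-!
Write `f(x) = δ x (x - c) - ξ² (1 - x)`, so that the recursion says `f(ξ') = 0`. For `x + y ≥ c`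
the difference `f(x) - f(y) = (x - y)(δ (x + y - c) + ξ²)` has the sign of `x - y`, so it suffices
to show `f(ξ*) ≤ 0`. Since `ξ ≥ ξ*`, this reduces to `δ (ξ* - c) ≤ ξ* (1 - ξ*)`, which holds
trivially when `ξ* ≤ c` and otherwise follows from `δ ≤ 1 + ξ*/9` and `c = (10 ξ*/9)²`.
-/

def xiResidual (δ c ξ x : ℝ) : ℝ := δ * x * (x - c) - ξ ^ 2 * (1 - x)

lemma xiResidual_sub_xiResidual (δ c ξ x y : ℝ) :
    xiResidual δ c ξ x - xiResidual δ c ξ y = (x - y) * (δ * (x + y - c) + ξ ^ 2) := by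
  unfold xiResidual
  ring

lemma le_of_xiResidual_le {δ c ξ x y : ℝ} (hδ : 0 ≤ δ) (hξ : ξ ≠ 0) (hxy : c ≤ x + y)
    (h : xiResidual δ c ξ x ≤ xiResidual δ c ξ y) : x ≤ y := by
  have hfactor : 0 < δ * (x + y - c) + ξ ^ 2 := by
    have := sub_nonneg.2 hxy
    positivity
  by_contra! hlt
  have hsub := xiResidual_sub_xiResidual δ c ξ x y
  nlinarith [mul_pos (sub_pos.2 hlt) hfactor]

lemma distortion_mul_sub_le {s δ : ℝ} (hδ1 : 1 ≤ δ)
    (hδ2 : δ ≤ 1 + 1 / 9 * (9 / 10 * s)) :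
    δ * (9 / 10 * s - s ^ 2) ≤ 9 / 10 * s * (1 - 9 / 10 * s) := by
  rcases le_or_gt (9 / 10 * s) (s ^ 2) with hle | hlt
  · nlinarith
  · nlinarith [mul_le_mul_of_nonneg_right hδ2 (sub_pos.2 hlt).le]

lemma xiResidual_lower_bound_nonpos {s δ ξ : ℝ} (hs0 : 0 ≤ s) (hs1 : s < 1) (hδ1 : 1 ≤ δ)
    (hδ2 : δ ≤ 1 + 1 / 9 * (9 / 10 * s)) (hξ : 9 / 10 * s ≤ ξ) :
    xiResidual δ (s ^ 2) ξ (9 / 10 * s) ≤ 0 := by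
  set t := 9 / 10 * s with ht
  have ht0 : 0 ≤ t := by positivity
  have ht1 : 0 ≤ 1 - t := by linarith
  have hsq : t ^ 2 ≤ ξ ^ 2 := pow_le_pow_left₀ ht0 hξ 2
  have hdist := distortion_mul_sub_le hδ1 hδ2
  have key : δ * t * (t - s ^ 2) ≤ ξ ^ 2 * (1 - t) :=
    calc δ * t * (t - s ^ 2) = t * (δ * (t - s ^ 2)) := by ring
      _ ≤ t * (t * (1 - t)) := mul_le_mul_of_nonneg_left hdist ht0
      _ = t ^ 2 * (1 - t) := by ring
      _ ≤ ξ ^ 2 * (1 - t) := mul_le_mul_of_nonneg_right hsq ht1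
  unfold xiResidual
  linarith

theorem xi_induction_step (c δ ξ ξ' : ℝ) (hc : c ∈ Set.Ioo (0 : ℝ) 1) (hδ1 : 1 ≤ δ)
    (hδ2 : δ ≤ 1 + 1 / 9 * (9 / 10 * Real.sqrt c))
    (hξ : 9 / 10 * Real.sqrt c ≤ ξ) (hξ' : ξ' ∈ Set.Ioo (0 : ℝ) 1)
    (hrec : δ * ξ' * (ξ' - c) = ξ ^ 2 * (1 - ξ')) :
    9 / 10 * Real.sqrt c ≤ ξ' := by
  obtain ⟨hc0, hc1⟩ := hc
  obtain ⟨hξ'0, hξ'1⟩ := hξ'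
  have hs1 : √c < 1 := (Real.sqrt_lt' one_pos).2 (by linarith)
  have hξ0 : 0 < ξ := by linarith [Real.sqrt_pos.2 hc0]
  have hcξ' : c < ξ' := by
    have hpos : 0 < δ * ξ' * (ξ' - c) := by
      rw [hrec]
      exact mul_pos (pow_pos hξ0 2) (sub_pos.2 hξ'1)
    exact sub_pos.1 ((pos_iff_pos_of_mul_pos hpos).1 (by positivity))
  have hfixed : xiResidual δ c ξ ξ' = 0 := by
    unfold xiResidual
    linarith
  have hbound : xiResidual δ c ξ (9 / 10 * √c) ≤ xiResidual δ c ξ ξ' := by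
    have hnonpos := xiResidual_lower_bound_nonpos (Real.sqrt_nonneg c) hs1 hδ1 hδ2 hξ
    rwa [Real.sq_sqrt hc0.le, ← hfixed] at hnonpos
  exact le_of_xiResidual_le (by linarith) hξ0.ne' (by linarith) hbound
end

section
/- Let μ, λ > 0 and let sequences A_k, B_k > 0 satisfy B_{k+1} = B_k/(θ_k δ_k), a_{k+1} = (2/μ)(1−θ_k)B_{k+1}, A_{k+1} = A_k + a_{k+1}, where θ_k is the smaller root of B_k(1−θ)² = μλθ((1−θ)B_k + (μ/2)δ_k A_k) and δ_k > 0. Then for all k ≥ 0, (1+μλ)a_{k+1}² = 2λ A_{k+1} B_{k+1}; equivalently B_{k+1}/A_{k+1} = ((1+μλ)/(2λ))(a_{k+1}/A_{k+1})². -/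
/- With `B_k = θ_k δ_k B_{k+1}`, the root equation divided by `θ_k δ_k` reads
`B_{k+1} (1 - θ_k)² - μλ θ_k (1 - θ_k) B_{k+1} = μ²λ A_k / 2`; multiplied by `4 B_{k+1} / μ²`
it is exactly `(1 + μλ) a_{k+1}² = 2λ (A_k + a_{k+1}) B_{k+1}`. -/

theorem one_add_mul_mul_sq_eq_of_isRoot {μ lam θ δ A B B' a' : ℝ}
    (hμ : μ ≠ 0) (hθ : θ ≠ 0) (hδ : δ ≠ 0)
    (hroot : B * (1 - θ) ^ 2 = μ * lam * θ * ((1 - θ) * B + μ / 2 * δ * A))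
    (hB' : B' = B / (θ * δ)) (ha' : a' = 2 / μ * (1 - θ) * B') :
    (1 + μ * lam) * a' ^ 2 = 2 * lam * (A + a') * B' := by
  subst hB' ha'
  field_simp
  linear_combination 2 * B * hroot

theorem div_eq_div_mul_div_sq_of_mul_sq_eq {c d a A B : ℝ} (hd : d ≠ 0) (hA : A ≠ 0)
    (h : c * a ^ 2 = d * A * B) :
    B / A = c / d * (a / A) ^ 2 := by
  field_simp
  linear_combination -h

theorem riemannian_parameter_identity_general (μ lam : ℝ) (hμ : 0 < μ) (hlam : 0 < lam)
    (A B a θ δ : ℕ → ℝ)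
    (hA : ∀ k, 0 < A k) (hδ : ∀ k, 0 < δ k)
    (hθ : ∀ k, θ k ∈ Set.Ioo (0 : ℝ) 1)
    (hθroot : ∀ k, B k * (1 - θ k) ^ 2
        = μ * lam * θ k * ((1 - θ k) * B k + μ / 2 * δ k * A k))
    (hBrec : ∀ k, B (k + 1) = B k / (θ k * δ k))
    (harec : ∀ k, a (k + 1) = 2 / μ * (1 - θ k) * B (k + 1))
    (hArec : ∀ k, A (k + 1) = A k + a (k + 1)) :
    ∀ k, (1 + μ * lam) * a (k + 1) ^ 2 = 2 * lam * A (k + 1) * B (k + 1)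
      ∧ B (k + 1) / A (k + 1) = (1 + μ * lam) / (2 * lam) * (a (k + 1) / A (k + 1)) ^ 2 := by
  intro k
  have hsq : (1 + μ * lam) * a (k + 1) ^ 2 = 2 * lam * A (k + 1) * B (k + 1) := by
    rw [hArec k]
    exact one_add_mul_mul_sq_eq_of_isRoot hμ.ne' (hθ k).1.ne' (hδ k).ne' (hθroot k)
      (hBrec k) (harec k)
  exact ⟨hsq, div_eq_div_mul_div_sq_of_mul_sq_eq (by positivity) (hA (k + 1)).ne' hsq⟩

theorem riemannian_parameter_identity (μ lam : ℝ) (hμ : 0 < μ) (hlam : 0 < lam)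
    (A B a θ δ : ℕ → ℝ)
    (hA : ∀ k, 0 < A k) (hB : ∀ k, 0 < B k) (hδ : ∀ k, 0 < δ k)
    (hθ : ∀ k, θ k ∈ Set.Ioo (0 : ℝ) 1)
    (hθroot : ∀ k, B k * (1 - θ k) ^ 2
        = μ * lam * θ k * ((1 - θ k) * B k + μ / 2 * δ k * A k))
    (hθsmall : ∀ (k : ℕ) (t : ℝ), B k * (1 - t) ^ 2
        = μ * lam * t * ((1 - t) * B k + μ / 2 * δ k * A k) → θ k ≤ t)
    (hBrec : ∀ k, B (k + 1) = B k / (θ k * δ k))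
    (harec : ∀ k, a (k + 1) = 2 / μ * (1 - θ k) * B (k + 1))
    (hArec : ∀ k, A (k + 1) = A k + a (k + 1)) :
    ∀ k, (1 + μ * lam) * a (k + 1) ^ 2 = 2 * lam * A (k + 1) * B (k + 1)
      ∧ B (k + 1) / A (k + 1) = (1 + μ * lam) / (2 * lam) * (a (k + 1) / A (k + 1)) ^ 2 :=
  riemannian_parameter_identity_general μ lam hμ hlam A B a θ δ hA hδ hθ hθroot hBrec harec hArec
end
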